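/- Let Ω₁,…,Ωₙ (n≥2) be closed subsets of a Banach space X, x̄ ∈ ∩_{i=1}^n Ωᵢ, a₁,…,a_{n−1} ∈ X, ε > 0 and φ ∈ 𝒞¹. Suppose ∩_{i=1}^{n−1}(Ωᵢ−aᵢ) ∩ Ωₙ = ∅ and φ(max_{1≤i≤n−1}‖aᵢ‖) < φ(d(Ω₁−a₁,…,Ω_{n−1}−a_{n−1},Ωₙ)) + ε. Then for any λ>0 and η>0 there exist points ωᵢ ∈ Ωᵢ ∩ B_λ(x̄) (i=1,…,n−1) and ωₙ ∈ Ωₙ ∩ B_η(x̄) with 0 < max_{1≤i≤n−1}‖ωₙ+aᵢ−ωᵢ‖ ≤ max_{1≤i≤n−1}‖aᵢ‖, and vectors x₁*,…,xₙ* ∈ X* such that Σ_{i=1}^n xᵢ* = 0, Σ_{i=1}^{n−1}‖xᵢ*‖ = 1, Σ_{i=1}^{n−1}⟨xᵢ*, ωₙ+aᵢ−ωᵢ⟩ = max_{1≤i≤n−1}‖ωₙ+aᵢ−ωᵢ‖, and φ'(max_{1≤i≤n−1}‖ωₙ+aᵢ−ωᵢ‖)·(λ Σ_{i=1}^{n−1}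 d(xᵢ*, N^C_{Ωᵢ}(ωᵢ)) + η d(xₙ*, N^C_{Ωₙ}(ωₙ))) < ε, where the distances in X* are with respect to the dual norm. -/

import Mathlib

/-!
Apply Ekeland's variational principle to `(ω, ωn) ↦ φ ‖(ωn + aᵢ - ωᵢ)ᵢ‖` on `∏ Ωᵢ × Ωₙ`, with the
weighted metric `max (‖ω - ω'‖ / (θλ)) (‖ωn - ωn'‖ / (θη))` and `ε' < θ ε`. This gives `(ω, ωn)`
close to `(x̄, x̄)` at which the function plus `ε'` times the distance is minimal; its residual
`v = (ωn + aᵢ - ωᵢ)ᵢ` is nonzero because the shifted sets do not intersect. Differentiating along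
Clarke tangent directions `k` gives `0 ≤ φ'(‖v‖) ‖·‖'(v; (kₙ - kᵢ)ᵢ) + ε' ‖k‖_weighted` on the
Clarke tangent cone. An M. Riesz extension splits this sublinear inequality into a subgradient of
the max-norm at `v`, whose components are the multipliers `xᵢ*`, and a functional dominated by
`ε'/φ'(‖v‖)` times the weighted norm, whose components bound the distances of the `xᵢ*` to the
Clarke normal cones.
-/

open Filter

/-- The nonintersect index `d(Ω₁,…,Ω_m,Ωₙ) = inf{ max_i ‖uₙ − uᵢ‖ : uᵢ ∈ Ωᵢ, uₙ ∈ Ωₙ }`. -/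
noncomputable def nonintersectIndex {X : Type*} [NormedAddCommGroup X] {m : ℕ}
    (Ω : Fin m → Set X) (Ωn : Set X) : ℝ :=
  sInf {r : ℝ | ∃ (u : Fin m → X) (un : X),
    (∀ i, u i ∈ Ω i) ∧ un ∈ Ωn ∧ r = ⨆ i, ‖un - u i‖}

/-- The Clarke tangent cone to `Ω` at `x`. -/
def clarkeTangent {X : Type*} [NormedAddCommGroup X] [NormedSpace ℝ X]
    (Ω : Set X) (x : X) : Set X :=
  {z : X | ∀ (xs : ℕ → X) (ts : ℕ → ℝ),
    (∀ k, xs k ∈ Ω) → Tendsto xs atTop (nhds x) →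
    (∀ k, 0 < ts k) → Antitone ts → Tendsto ts atTop (nhds 0) →
    ∃ zs : ℕ → X, Tendsto zs atTop (nhds z) ∧ ∀ k, xs k + ts k • zs k ∈ Ω}

/-- The Clarke normal cone to `Ω` at `x` (a subset of the dual space). -/
def clarkeNormal {X : Type*} [NormedAddCommGroup X] [NormedSpace ℝ X]
    (Ω : Set X) (x : X) : Set (X →L[ℝ] ℝ) :=
  {p : X →L[ℝ] ℝ | ∀ z ∈ clarkeTangent Ω x, p z ≤ 0}

open Set Topology

structure IsSublinear {E : Type*} [AddCommGroup E] [Module ℝ E] (q : E → ℝ) : Prop where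
  smul_eq : ∀ c : ℝ, 0 < c → ∀ x, q (c • x) = c * q x
  add_le : ∀ x y, q (x + y) ≤ q x + q y

namespace IsSublinear

variable {E : Type*} [AddCommGroup E] [Module ℝ E] {q : E → ℝ}

theorem map_zero (hq : IsSublinear q) : q 0 = 0 := by
  have := hq.smul_eq 2 two_pos 0
  rw [smul_zero] at this
  linarith

theorem const_mul (hq : IsSublinear q) {c : ℝ} (hc : 0 ≤ c) : IsSublinear fun x => c * q x where
  smul_eq r hr x := by rw [hq.smul_eq r hr]; ring
  add_le x y := by rw [← mul_add]; exact mul_le_mul_of_nonneg_left (hq.add_le x y) hc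

end IsSublinear

section RieszExtension

variable {E F : Type*} [AddCommGroup E] [Module ℝ E] [AddCommGroup F] [Module ℝ F]
  {q₁ : F → ℝ} {q₂ : E → ℝ}

def epiInfConvCone (A : E →ₗ[ℝ] F) (hq₁ : IsSublinear q₁) (hq₂ : IsSublinear q₂)
    (K : PointedCone ℝ E) : PointedCone ℝ ((F × E) × ℝ) where
  carrier := {p | ∃ k ∈ K, q₁ (p.1.1 + A k) + q₂ (p.1.2 + k) ≤ p.2}
  zero_mem' := ⟨0, K.zero_mem, by simp [hq₁.map_zero, hq₂.map_zero]⟩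
  add_mem' := by
    rintro p p' ⟨k, hk, hp⟩ ⟨k', hk', hp'⟩
    refine ⟨k + k', K.add_mem hk hk', ?_⟩
    have h₁ := hq₁.add_le (p.1.1 + A k) (p'.1.1 + A k')
    have h₂ := hq₂.add_le (p.1.2 + k) (p'.1.2 + k')
    simp only [Prod.fst_add, Prod.snd_add, map_add]
    rw [add_add_add_comm, add_add_add_comm p.1.2]
    linarith
  smul_mem' := by
    rintro ⟨c, hc⟩ p ⟨k, hk, hp⟩
    rcases hc.eq_or_lt with rfl | hc
    · exact ⟨0, K.zero_mem, by simp [hq₁.map_zero, hq₂.map_zero]⟩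
    refine ⟨c • k, K.smul_mem hc.le hk, ?_⟩
    simp only [Nonneg.mk_smul, Prod.smul_fst, Prod.smul_snd, map_smul, ← smul_add,
      hq₁.smul_eq c hc, hq₂.smul_eq c hc, smul_eq_mul, ← mul_add]
    exact mul_le_mul_of_nonneg_left hp hc.le

theorem mem_epiInfConvCone {A : E →ₗ[ℝ] F} {hq₁ : IsSublinear q₁} {hq₂ : IsSublinear q₂}
    {K : PointedCone ℝ E} {p : (F × E) × ℝ} :
    p ∈ epiInfConvCone A hq₁ hq₂ K ↔ ∃ k ∈ K, q₁ (p.1.1 + A k) + q₂ (p.1.2 + k) ≤ p.2 :=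
  Iff.rfl

theorem exists_linear_le_of_nonneg_on_cone (A : E →ₗ[ℝ] F) (hq₁ : IsSublinear q₁)
    (hq₂ : IsSublinear q₂) (K : PointedCone ℝ E) (hK : ∀ k ∈ K, 0 ≤ q₁ (A k) + q₂ k) :
    ∃ (ξ : F →ₗ[ℝ] ℝ) (ℓ : E →ₗ[ℝ] ℝ), (∀ y, ξ y ≤ q₁ y) ∧ (∀ x, ℓ x ≤ q₂ x) ∧
      ∀ k ∈ K, 0 ≤ ξ (A k) + ℓ k := by
  -- extend `((0, 0), t) ↦ t` to a functional `g` nonnegative on the cone; then `g = t - ξ y - ℓ x`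
  obtain ⟨g, hgt, hg_nonneg⟩ := riesz_extension (epiInfConvCone A hq₁ hq₂ K)
    ((LinearMap.snd ℝ _ _).toPMap (LinearMap.ker (LinearMap.fst ℝ (F × E) ℝ)))
    (fun ⟨p, hp0⟩ hp => by
      obtain ⟨k, hk, hp⟩ := mem_epiInfConvCone.mp hp
      rw [show p.1 = 0 from hp0, Prod.fst_zero, Prod.snd_zero, zero_add, zero_add] at hp
      exact (hK k hk).trans hp)
    (fun p => ⟨⟨(0, q₁ p.1.1 + q₂ p.1.2 - p.2), LinearMap.mem_ker.mpr rfl⟩,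
      mem_epiInfConvCone.mpr ⟨0, K.zero_mem, by simp⟩⟩)
  set ξ : F →ₗ[ℝ] ℝ := -(g ∘ₗ LinearMap.inl ℝ _ _ ∘ₗ LinearMap.inl ℝ _ _)
  set ℓ : E →ₗ[ℝ] ℝ := -(g ∘ₗ LinearMap.inl ℝ _ _ ∘ₗ LinearMap.inr ℝ _ _)
  have hg : ∀ y x t, g ((y, x), t) = t - ξ y - ℓ x := by
    intro y x t
    rw [show ((y, x), t) = ((y, 0), 0) + ((0, x), 0) + ((0, 0), t) by simp, map_add, map_add,
      Prod.mk_zero_zero, hgt ⟨(0, t), LinearMap.mem_ker.mpr rfl⟩]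
    simp [ξ, ℓ]
    ring
  refine ⟨ξ, ℓ, fun y => ?_, fun x => ?_, fun k hk => ?_⟩
  · have := hg_nonneg ((y, 0), q₁ y)
      (mem_epiInfConvCone.mpr ⟨0, K.zero_mem, by simp [hq₂.map_zero]⟩)
    rw [hg, map_zero] at this
    linarith
  · have := hg_nonneg ((0, x), q₂ x)
      (mem_epiInfConvCone.mpr ⟨0, K.zero_mem, by simp [hq₁.map_zero]⟩)
    rw [hg, map_zero] at this
    linarith
  · have := hg_nonneg ((-A k, -k), 0)
      (mem_epiInfConvCone.mpr ⟨k, hk, by simp [hq₁.map_zero, hq₂.map_zero]⟩)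
    rw [hg, map_neg, map_neg] at this
    linarith

end RieszExtension

theorem iSup_norm_eq_norm {ι F : Type*} [Fintype ι] [SeminormedAddCommGroup F] (v : ι → F) :
    (⨆ i, ‖v i‖) = ‖v‖ :=
  le_antisymm (Real.iSup_le (norm_le_pi_norm v) (norm_nonneg v))
    ((pi_norm_le_iff_of_nonneg (Real.iSup_nonneg fun i => norm_nonneg (v i))).mpr
      fun i => le_ciSup (Finite.bddAbove_range fun i => ‖v i‖) i)

section DualNorm

variable {F : Type*} [NormedAddCommGroup F] [NormedSpace ℝ F]

theorem LinearMap.norm_apply_le_of_apply_le {ℓ : F →ₗ[ℝ] ℝ} {C : ℝ} (h : ∀ x, ℓ x ≤ C * ‖x‖)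
    (x : F) : ‖ℓ x‖ ≤ C * ‖x‖ := by
  have := h (-x)
  rw [map_neg, norm_neg] at this
  rw [Real.norm_eq_abs, abs_le]
  exact ⟨by linarith, h x⟩

theorem ContinuousLinearMap.exists_norm_le_one_lt_apply (L : F →L[ℝ] ℝ) {r : ℝ}
    (hr : r < ‖L‖) : ∃ x, ‖x‖ ≤ 1 ∧ r < L x := by
  obtain ⟨x, hx, hrx⟩ := L.exists_lt_apply_of_lt_opNorm hr
  rcases lt_abs.mp hrx with h | h
  · exact ⟨x, hx.le, h⟩
  · exact ⟨-x, by simpa using hx.le, by simpa using h⟩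

theorem sum_norm_le_of_forall_sum_apply_le {ι : Type*} [Fintype ι] (L : ι → F →L[ℝ] ℝ)
    {C : ℝ} (h : ∀ x : ι → F, (∀ i, ‖x i‖ ≤ 1) → ∑ i, L i (x i) ≤ C) : ∑ i, ‖L i‖ ≤ C := by
  refine le_of_forall_pos_le_add fun δ hδ => ?_
  set δ' := δ / (Fintype.card ι + 1)
  have hδ' : 0 < δ' := by positivity
  choose x hx hLx using fun i => (L i).exists_norm_le_one_lt_apply (sub_lt_self ‖L i‖ hδ')
  have hcard : Fintype.card ι * δ' ≤ δ := by
    rw [mul_div_assoc', div_le_iff₀ (by positivity)]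
    nlinarith
  calc ∑ i, ‖L i‖ ≤ ∑ i, (L i (x i) + δ') := Finset.sum_le_sum fun i _ => by linarith [hLx i]
    _ ≤ C + δ := by
      rw [Finset.sum_add_distrib, Finset.sum_const, Finset.card_univ, nsmul_eq_mul]
      linarith [h x hx]

variable {ι : Type*} [Fintype ι] [DecidableEq ι]

theorem ContinuousLinearMap.apply_eq_sum_comp_single (ξ : (ι → F) →L[ℝ] ℝ) (y : ι → F) :
    ξ y = ∑ i, ξ.comp (.single ℝ (fun _ => F) i) (y i) := by
  conv_lhs => rw [← Finset.univ_sum_single y]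
  simp

theorem sum_norm_comp_single_eq_one {ξ : (ι → F) →L[ℝ] ℝ} (hξ : ∀ y, ξ y ≤ ‖y‖) {v : ι → F}
    (hv : v ≠ 0) (hξv : ‖v‖ ≤ ξ v) :
    ∑ i, ‖ξ.comp (.single ℝ (fun _ => F) i)‖ = 1 ∧ ξ v = ‖v‖ := by
  set L := fun i => ξ.comp (.single ℝ (fun _ => F) i)
  have hL : ∑ i, ‖L i‖ ≤ 1 := sum_norm_le_of_forall_sum_apply_le L fun x hx => by
    rw [← ξ.apply_eq_sum_comp_single]
    exact (hξ x).trans ((pi_norm_le_iff_of_nonneg zero_le_one).mpr hx)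
  have hξv' : ξ v ≤ (∑ i, ‖L i‖) * ‖v‖ := by
    rw [ξ.apply_eq_sum_comp_single, Finset.sum_mul]
    refine Finset.sum_le_sum fun i _ => (le_abs_self _).trans ?_
    exact ((L i).le_opNorm (v i)).trans (by gcongr; exact norm_le_pi_norm v i)
  have hv : 0 < ‖v‖ := norm_pos_iff.mpr hv
  constructor <;> nlinarith

end DualNorm

section WeightedNorm

variable {E F : Type*} [NormedAddCommGroup E] [NormedAddCommGroup F]

noncomputable def prodWeightedNorm (r ρ : ℝ) (z : E × F) : ℝ := max (‖z.1‖ / r) (‖z.2‖ / ρ)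

theorem prodWeightedNorm_le_one_iff {r ρ : ℝ} (hr : 0 < r) (hρ : 0 < ρ) {z : E × F} :
    prodWeightedNorm r ρ z ≤ 1 ↔ ‖z.1‖ ≤ r ∧ ‖z.2‖ ≤ ρ := by
  simp [prodWeightedNorm, div_le_one hr, div_le_one hρ]

theorem prodWeightedNorm_le {r : ℝ} (hr : 0 ≤ r) (ρ : ℝ) (z : E × F) :
    prodWeightedNorm r ρ z ≤ max r⁻¹ ρ⁻¹ * ‖z‖ := by
  rw [prodWeightedNorm, div_eq_inv_mul, div_eq_inv_mul]
  exact max_le (mul_le_mul (le_max_left _ _) (norm_fst_le z) (norm_nonneg _) (by positivity))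
    (mul_le_mul (le_max_right _ _) (norm_snd_le z) (norm_nonneg _) (by positivity))

theorem continuous_prodWeightedNorm (r ρ : ℝ) :
    Continuous (prodWeightedNorm r ρ : E × F → ℝ) := by
  unfold prodWeightedNorm
  fun_prop

variable [NormedSpace ℝ E] [NormedSpace ℝ F]

theorem prodWeightedNorm_eq_norm {r ρ : ℝ} (hr : 0 ≤ r) (hρ : 0 ≤ ρ) (z : E × F) :
    prodWeightedNorm r ρ z = ‖(r⁻¹ • z.1, ρ⁻¹ • z.2)‖ := by
  simp [prodWeightedNorm, Prod.norm_def, norm_smul, abs_of_nonneg, hr, hρ, div_eq_inv_mul]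

theorem isSublinear_prodWeightedNorm {r ρ : ℝ} (hr : 0 ≤ r) (hρ : 0 ≤ ρ) :
    IsSublinear (prodWeightedNorm r ρ : E × F → ℝ) where
  smul_eq c hc z := by
    simp only [prodWeightedNorm_eq_norm hr hρ, Prod.smul_fst, Prod.smul_snd, smul_comm _ c,
      ← Prod.smul_mk, norm_smul, Real.norm_of_nonneg hc.le]
  add_le z z' := by
    simp only [prodWeightedNorm_eq_norm hr hρ, Prod.fst_add, Prod.snd_add, smul_add,
      ← Prod.mk_add_mk]
    exact norm_add_le _ _

theorem weighted_sum_norm_le {ι : Type*} [Fintype ι] [DecidableEq ι] {ℓ : (ι → F) × F →L[ℝ] ℝ}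
    {C r ρ : ℝ} (hr : 0 < r) (hρ : 0 < ρ)
    (h : ∀ z : (ι → F) × F, prodWeightedNorm r ρ z ≤ 1 → ℓ z ≤ C) :
    r * ∑ i, ‖ℓ.comp ((ContinuousLinearMap.inl ℝ _ F).comp (.single ℝ (fun _ => F) i))‖ +
      ρ * ‖ℓ.comp (.inr ℝ (ι → F) F)‖ ≤ C := by
  set L : Option ι → F →L[ℝ] ℝ := fun o => o.elim (ρ • ℓ.comp (.inr ℝ (ι → F) F))
    fun i => r • ℓ.comp ((ContinuousLinearMap.inl ℝ _ F).comp (.single ℝ (fun _ => F) i))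
  have := sum_norm_le_of_forall_sum_apply_le L fun x hx => by
    refine le_of_eq_of_le ?_ (h (fun i => r • x (some i), ρ • x none) ?_)
    · rw [← ℓ.comp_inl_add_comp_inr, (ℓ.comp _).apply_eq_sum_comp_single, Fintype.sum_option]
      simp [L, add_comm]
    · refine (prodWeightedNorm_le_one_iff hr hρ).mpr ⟨(pi_norm_le_iff_of_nonneg hr.le).mpr
        fun i => ?_, ?_⟩
      · simpa [norm_smul, abs_of_pos hr] using mul_le_of_le_one_right hr.le (hx (some i))
      · simpa [norm_smul, abs_of_pos hρ] using mul_le_of_le_one_right hρ.le (hx none)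
  simpa [L, Fintype.sum_option, norm_smul, abs_of_pos hr, abs_of_pos hρ, Finset.mul_sum,
    add_comm] using this

end WeightedNorm

theorem tendsto_const_mul_nhdsGT_zero {r : ℝ} (hr : 0 < r) :
    Tendsto (fun t => r * t) (𝓝[>] 0) (𝓝[>] 0) :=
  tendsto_iff_comap.mpr (comap_mulLeft_nhdsGT_zero hr).ge

theorem tendsto_one_div_add_one_nhdsGT_zero :
    Tendsto (fun k : ℕ => 1 / ((k : ℝ) + 1)) atTop (𝓝[>] 0) :=
  tendsto_nhdsWithin_iff.mpr
    ⟨tendsto_one_div_add_atTop_nhds_zero_nat, Eventually.of_forall fun k => by simp; positivity⟩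

theorem HasDerivAt.tendsto_sub_div {φ : ℝ → ℝ} {c y : ℝ} (hφ : HasDerivAt φ c y) {α : Type*}
    {l : Filter α} {t u : α → ℝ} {q : ℝ} (ht : Tendsto t l (𝓝[>] 0))
    (hu : Tendsto (fun k => (u k - y) / t k) l (𝓝 q)) :
    Tendsto (fun k => (φ (u k) - φ y) / t k) l (𝓝 (c * q)) := by
  have htpos : ∀ᶠ k in l, 0 < t k := ht self_mem_nhdsWithin
  have hO : (fun k => u k - y) =O[l] t := by
    refine ((hu.isBigO_one ℝ).mul (Asymptotics.isBigO_refl t l)).congr' ?_ (by simp)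
    filter_upwards [htpos] with k hk
    field_simp
  have hy : Tendsto u l (𝓝 y) := by
    have := hO.trans_tendsto (ht.mono_right nhdsWithin_le_nhds)
    simpa using this.add_const y
  have ho := ((hasDerivAt_iff_isLittleO.mp hφ).comp_tendsto hy).trans_isBigO hO
  have := ho.tendsto_div_nhds_zero.add (hu.const_mul c)
  rw [zero_add] at this
  refine this.congr fun k => ?_
  simp only [Function.comp_apply, smul_eq_mul]
  ring

section NormDirDeriv

variable {E : Type*} [SeminormedAddCommGroup E] [NormedSpace ℝ E]

noncomputable def normDirDeriv (v w : E) : ℝ :=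
  derivWithin (fun t : ℝ => ‖v + t • w‖) (Ioi 0) 0

theorem convexOn_norm_add_smul (v w : E) : ConvexOn ℝ univ fun t : ℝ => ‖v + t • w‖ := by
  have := (convexOn_norm (E := E) convex_univ).comp_affineMap
    ((AffineMap.lineMap v (v + w) : ℝ →ᵃ[ℝ] E))
  simpa [Function.comp_def, AffineMap.lineMap_apply, add_comm] using this

theorem hasDerivWithinAt_normDirDeriv (v w : E) :
    HasDerivWithinAt (fun t : ℝ => ‖v + t • w‖) (normDirDeriv v w) (Ioi 0) 0 :=
  (convexOn_norm_add_smul v w).hasDerivWithinAt_rightDeriv_of_mem_interior (by simp)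

theorem normDirDeriv_le_div {v w : E} {t : ℝ} (ht : 0 < t) :
    normDirDeriv v w ≤ (‖v + t • w‖ - ‖v‖) / t := by
  simpa [slope_def_field] using (convexOn_norm_add_smul v w).le_slope_of_hasDerivWithinAt_Ioi
    (mem_univ 0) (mem_univ t) ht (hasDerivWithinAt_normDirDeriv v w)

theorem normDirDeriv_le_norm (v w : E) : normDirDeriv v w ≤ ‖w‖ := by
  have := normDirDeriv_le_div (v := v) (w := w) one_pos
  rw [one_smul, div_one] at this
  linarith [norm_add_le v w]

theorem normDirDeriv_neg_self_le (v : E) : normDirDeriv v (-v) ≤ -‖v‖ := by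
  simpa using normDirDeriv_le_div (v := v) (w := -v) one_pos

theorem tendsto_div_normDirDeriv {α : Type*} {l : Filter α} {ts : α → ℝ} {ws : α → E}
    (v : E) {w : E} (hts : Tendsto ts l (𝓝[>] 0)) (hws : Tendsto ws l (𝓝 w)) :
    Tendsto (fun k => (‖v + ts k • ws k‖ - ‖v‖) / ts k) l (𝓝 (normDirDeriv v w)) := by
  have h₁ : Tendsto (fun k => (‖v + ts k • w‖ - ‖v‖) / ts k) l (𝓝 (normDirDeriv v w)) :=
    (((hasDerivWithinAt_iff_tendsto_slope' self_notMem_Ioi).mp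
      (hasDerivWithinAt_normDirDeriv v w)).comp hts).congr fun k => by simp [slope_def_field]
  have h₂ : Tendsto (fun k => (‖v + ts k • ws k‖ - ‖v + ts k • w‖) / ts k) l (𝓝 0) := by
    refine squeeze_zero_norm' ?_ (by simpa using (hws.sub_const w).norm)
    filter_upwards [hts self_mem_nhdsWithin] with k (hk : 0 < ts k)
    rw [norm_div, Real.norm_of_nonneg hk.le, div_le_iff₀ hk, Real.norm_eq_abs]
    calc |‖v + ts k • ws k‖ - ‖v + ts k • w‖| ≤ ‖(v + ts k • ws k) - (v + ts k • w)‖ :=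
          abs_norm_sub_norm_le _ _
      _ = ‖ws k - w‖ * ts k := by
          rw [add_sub_add_left_eq_sub, ← smul_sub, norm_smul, Real.norm_of_nonneg hk.le, mul_comm]
  rw [← add_zero (normDirDeriv v w)]
  exact (h₁.add h₂).congr fun k => by ring

theorem normDirDeriv_smul (v w : E) {r : ℝ} (hr : 0 < r) :
    normDirDeriv v (r • w) = r * normDirDeriv v w := by
  refine tendsto_nhds_unique (tendsto_div_normDirDeriv v tendsto_id tendsto_const_nhds) ?_
  refine ((tendsto_div_normDirDeriv v (tendsto_const_mul_nhdsGT_zero hr)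
    tendsto_const_nhds).const_mul r).congr' (eventually_nhdsWithin_of_forall fun t ht => ?_)
  have ht : t ≠ 0 := (mem_Ioi.mp ht).ne'
  simp only [id, smul_smul, mul_comm t r]
  field_simp

theorem normDirDeriv_add_le (v w w' : E) :
    normDirDeriv v (w + w') ≤ normDirDeriv v w + normDirDeriv v w' := by
  have h₂ := tendsto_const_mul_nhdsGT_zero two_pos
  refine le_of_tendsto_of_tendsto (tendsto_div_normDirDeriv v tendsto_id tendsto_const_nhds)
    ((tendsto_div_normDirDeriv v h₂ tendsto_const_nhds).add
      (tendsto_div_normDirDeriv v h₂ tendsto_const_nhds))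
    (eventually_nhdsWithin_of_forall fun t (ht : 0 < t) => ?_)
  have hconv : 2 * ‖v + t • (w + w')‖ ≤ ‖v + (2 * t) • w‖ + ‖v + (2 * t) • w'‖ :=
    calc 2 * ‖v + t • (w + w')‖ = ‖(2 : ℝ) • (v + t • (w + w'))‖ := by
          rw [norm_smul, Real.norm_two]
      _ = ‖(v + (2 * t) • w) + (v + (2 * t) • w')‖ := by congr 1; module
      _ ≤ _ := norm_add_le _ _
  simp only [id]
  rw [← add_div, div_le_div_iff₀ ht (by positivity)]
  nlinarith

theorem isSublinear_normDirDeriv (v : E) : IsSublinear (normDirDeriv v) :=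
  ⟨fun _ hr w => normDirDeriv_smul v w hr, normDirDeriv_add_le v⟩

end NormDirDeriv

section Ekeland

variable {M : Type*} [PseudoMetricSpace M]

def ekelandSet (W : Set M) (f : M → ℝ) (ε : ℝ) (x : M) : Set M :=
  {u | u ∈ W ∧ f u + ε * dist u x ≤ f x}

theorem self_mem_ekelandSet {W : Set M} {f : M → ℝ} {ε : ℝ} {x : M} (hx : x ∈ W) :
    x ∈ ekelandSet W f ε x :=
  ⟨hx, by simp⟩

theorem ekelandSet_trans {W : Set M} {f : M → ℝ} {ε : ℝ} (hε : 0 ≤ ε) {x y u : M}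
    (hy : y ∈ ekelandSet W f ε x) (hu : u ∈ ekelandSet W f ε y) : u ∈ ekelandSet W f ε x :=
  ⟨hu.1, by nlinarith [hy.2, hu.2, dist_triangle u y x]⟩

theorem isClosed_ekelandSet {W : Set M} (hW : IsClosed W) {f : M → ℝ} (hf : Continuous f)
    (ε : ℝ) (x : M) : IsClosed (ekelandSet W f ε x) :=
  hW.inter (isClosed_le (hf.add (continuous_const.mul (continuous_id.dist continuous_const)))
    continuous_const)

theorem exists_mem_ekelandSet_two_mul_le {W : Set M} {f : M → ℝ} {b : ℝ}
    (hb : ∀ u ∈ W, b ≤ f u) (ε : ℝ) {x : M} (hx : x ∈ W) :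
    ∃ y ∈ ekelandSet W f ε x, ∀ u ∈ ekelandSet W f ε x, 2 * f y ≤ f x + f u := by
  set S := ekelandSet W f ε x
  have hbdd : BddBelow (f '' S) := ⟨b, by rintro _ ⟨u, hu, rfl⟩; exact hb u hu.1⟩
  have hle : ∀ u ∈ S, sInf (f '' S) ≤ f u := fun u hu => csInf_le hbdd ⟨u, hu, rfl⟩
  rcases (hle x (self_mem_ekelandSet hx)).eq_or_lt with h | h
  · exact ⟨x, self_mem_ekelandSet hx, fun u hu => by linarith [hle u hu]⟩
  obtain ⟨_, ⟨y, hy, rfl⟩, hy'⟩ := exists_lt_of_csInf_lt (s := f '' S)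
    ⟨_, x, self_mem_ekelandSet hx, rfl⟩
    (by linarith : sInf (f '' S) < (f x + sInf (f '' S)) / 2)
  exact ⟨y, hy, fun u hu => by linarith [hle u hu]⟩

theorem exists_ekeland_seq {W : Set M} {f : M → ℝ} {b : ℝ} (hb : ∀ u ∈ W, b ≤ f u) {ε : ℝ}
    (hε : 0 ≤ ε) {x₀ : M} (hx₀ : x₀ ∈ W) :
    ∃ seq : ℕ → M, seq 0 = x₀ ∧ (∀ k j, k ≤ j → seq j ∈ ekelandSet W f ε (seq k)) ∧
      ∀ k, ∀ u ∈ ekelandSet W f ε (seq k), 2 * f (seq (k + 1)) ≤ f (seq k) + f u := by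
  choose! next hnext hnext_le using fun x (hx : x ∈ W) => exists_mem_ekelandSet_two_mul_le hb ε hx
  have hsucc : ∀ k, next^[k + 1] x₀ = next (next^[k] x₀) := fun k =>
    Function.iterate_succ_apply' next k x₀
  have hmem : ∀ k, next^[k] x₀ ∈ W := by
    intro k
    induction k with
    | zero => exact hx₀
    | succ k ih => rw [hsucc]; exact (hnext _ ih).1
  refine ⟨fun k => next^[k] x₀, rfl, fun k j hkj => ?_, fun k u hu => ?_⟩
  · induction j, hkj using Nat.le_induction with
    | base => exact self_mem_ekelandSet (hmem k)
    | succ j _ ih =>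
      refine ekelandSet_trans hε ih ?_
      show next^[j + 1] x₀ ∈ _
      rw [hsucc]
      exact hnext _ (hmem j)
  · simpa only [hsucc] using hnext_le _ (hmem k) u hu

theorem cauchySeq_of_add_mul_dist_le {x : ℕ → M} {g : ℕ → ℝ} {b ε : ℝ} (hb : ∀ k, b ≤ g k)
    (hε : 0 < ε) (h : ∀ k j, k ≤ j → g j + ε * dist (x j) (x k) ≤ g k) : CauchySeq x := by
  have hg : Antitone g := fun k j hkj => by
    linarith [h k j hkj, mul_nonneg hε.le (dist_nonneg (x := x j) (y := x k))]
  have hg_cauchy := (tendsto_atTop_ciInf hg ⟨b, by rintro _ ⟨k, rfl⟩; exact hb k⟩).cauchySeq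
  refine Metric.cauchySeq_iff'.mpr fun e he => ?_
  obtain ⟨N, hN⟩ := Metric.cauchySeq_iff'.mp hg_cauchy (ε * e) (by positivity)
  refine ⟨N, fun n hn => lt_of_mul_lt_mul_left ?_ hε.le⟩
  have := hN n hn
  rw [Real.dist_eq, abs_lt] at this
  linarith [h N n hn]

theorem exists_ekeland [CompleteSpace M] {W : Set M} (hW : IsClosed W) {f : M → ℝ}
    (hf : Continuous f) {b : ℝ} (hb : ∀ u ∈ W, b ≤ f u) {ε : ℝ} (hε : 0 < ε) {x₀ : M}
    (hx₀ : x₀ ∈ W) (hmin : ∀ u ∈ W, f x₀ ≤ f u + ε) :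
    ∃ ω ∈ W, f ω ≤ f x₀ ∧ dist ω x₀ ≤ 1 ∧ ∀ u ∈ W, f ω ≤ f u + ε * dist u ω := by
  obtain ⟨x, hx0, hchain, hhalf⟩ := exists_ekeland_seq hb hε.le hx₀
  obtain ⟨ω, hω⟩ := cauchySeq_tendsto_of_complete (cauchySeq_of_add_mul_dist_le
    (fun k => hb _ (hchain k k le_rfl).1) hε fun k j hkj => (hchain k j hkj).2)
  have hωS : ∀ k, ω ∈ ekelandSet W f ε (x k) := fun k =>
    (isClosed_ekelandSet hW hf ε _).mem_of_tendsto hω (eventually_atTop.mpr ⟨k, hchain k⟩)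
  obtain ⟨hωW, hω₀⟩ : ω ∈ ekelandSet W f ε x₀ := hx0 ▸ hωS 0
  have hdist₀ := mul_nonneg hε.le (dist_nonneg (x := ω) (y := x₀))
  refine ⟨ω, hωW, by linarith, by nlinarith [hmin ω hωW], fun u hu => ?_⟩
  by_contra! hlt
  have hu : ∀ k, u ∈ ekelandSet W f ε (x k) :=
    fun k => ekelandSet_trans hε.le (hωS k) ⟨hu, hlt.le⟩
  have hfω : Tendsto (f ∘ x) atTop (𝓝 (f ω)) := (hf.tendsto ω).comp hω
  -- passing to the limit in the halving property gives `f ω ≤ f u`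
  have : 2 * f ω ≤ f ω + f u := le_of_tendsto_of_tendsto'
    ((hfω.comp (tendsto_add_atTop_nat 1)).const_mul 2) (hfω.add_const (f u))
    fun k => hhalf k u (hu k)
  nlinarith [mul_nonneg hε.le (dist_nonneg (x := u) (y := ω))]

end Ekeland

theorem exists_ekeland_prod {E F : Type*} [NormedAddCommGroup E] [NormedSpace ℝ E]
    [CompleteSpace E] [NormedAddCommGroup F] [NormedSpace ℝ F] [CompleteSpace F]
    {W : Set (E × F)} (hW : IsClosed W) {f : E × F → ℝ} (hf : Continuous f) {b : ℝ}
    (hb : ∀ u ∈ W, b ≤ f u) {ε : ℝ} (hε : 0 < ε) {x₀ : E × F} (hx₀ : x₀ ∈ W)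
    (hmin : ∀ u ∈ W, f x₀ ≤ f u + ε) {r ρ : ℝ} (hr : 0 < r) (hρ : 0 < ρ) :
    ∃ ω ∈ W, f ω ≤ f x₀ ∧ prodWeightedNorm r ρ (ω - x₀) ≤ 1 ∧
      ∀ u ∈ W, f ω ≤ f u + ε * prodWeightedNorm r ρ (u - ω) := by
  -- Ekeland's principle in the rescaled coordinates `T z = (z.1 / r, z.2 / ρ)`
  let S : E × F → E × F := fun y => (r • y.1, ρ • y.2)
  let T : E × F → E × F := fun z => (r⁻¹ • z.1, ρ⁻¹ • z.2)
  have hST : ∀ z, S (T z) = z := fun z => by simp [S, T, smul_smul, hr.ne', hρ.ne']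
  have hTS : ∀ y, T (S y) = y := fun y => by simp [S, T, smul_smul, hr.ne', hρ.ne']
  have hdist : ∀ u w, dist (T u) (T w) = prodWeightedNorm r ρ (u - w) := fun u w => by
    simp [dist_eq_norm, prodWeightedNorm_eq_norm hr.le hρ.le, T, smul_sub]
  have hS : Continuous S := by fun_prop
  obtain ⟨y, hyW, hfy, hy₀, hy⟩ := exists_ekeland (hW.preimage hS) (hf.comp hS)
    (fun y hy => hb _ hy) hε (x₀ := T x₀) (by simpa [hST] using hx₀)
    (fun y hy => by simpa [hST] using hmin _ hy)
  refine ⟨S y, hyW, by simpa [hST] using hfy, ?_, fun u hu => ?_⟩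
  · rw [← hdist, hTS]; exact hy₀
  · rw [← hdist u (S y), hTS]
    simpa [hST] using hy (T u) (by simpa [hST] using hu)

section Clarke

variable {X : Type*} [NormedAddCommGroup X] [NormedSpace ℝ X] {Ω : Set X} {x : X}

theorem zero_mem_clarkeTangent : (0 : X) ∈ clarkeTangent Ω x :=
  fun xs _ hxs _ _ _ _ => ⟨fun _ => 0, tendsto_const_nhds, fun k => by simpa using hxs k⟩

theorem add_mem_clarkeTangent {z z' : X} (hz : z ∈ clarkeTangent Ω x)
    (hz' : z' ∈ clarkeTangent Ω x) : z + z' ∈ clarkeTangent Ω x := by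
  intro xs ts hxs hlim hpos hanti h0
  obtain ⟨zs, hzs, hmem⟩ := hz xs ts hxs hlim hpos hanti h0
  have hlim' : Tendsto (fun k => xs k + ts k • zs k) atTop (𝓝 x) := by
    simpa using hlim.add (h0.smul hzs)
  obtain ⟨zs', hzs', hmem'⟩ := hz' _ ts hmem hlim' hpos hanti h0
  exact ⟨zs + zs', hzs.add hzs', fun k => by simpa [smul_add, add_assoc] using hmem' k⟩

theorem smul_mem_clarkeTangent {z : X} {r : ℝ} (hr : 0 ≤ r) (hz : z ∈ clarkeTangent Ω x) :
    r • z ∈ clarkeTangent Ω x := by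
  rcases hr.eq_or_lt with rfl | hr
  · simpa using zero_mem_clarkeTangent
  intro xs ts hxs hlim hpos hanti h0
  obtain ⟨zs, hzs, hmem⟩ := hz xs (fun k => ts k * r) hxs hlim (fun k => mul_pos (hpos k) hr)
    (fun i j hij => mul_le_mul_of_nonneg_right (hanti hij) hr.le) (by simpa using h0.mul_const r)
  exact ⟨fun k => r • zs k, hzs.const_smul r, fun k => by simpa [smul_smul] using hmem k⟩

def clarkeTangentCone (Ω : Set X) (x : X) : PointedCone ℝ X where
  carrier := clarkeTangent Ω x
  zero_mem' := zero_mem_clarkeTangent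
  add_mem' := add_mem_clarkeTangent
  smul_mem' c _ hz := smul_mem_clarkeTangent c.2 hz

theorem infDist_clarkeNormal_le {p q : X →L[ℝ] ℝ} (h : ∀ t ∈ clarkeTangent Ω x, p t ≤ q t) :
    Metric.infDist p (clarkeNormal Ω x) ≤ ‖q‖ := by
  refine (Metric.infDist_le_dist_of_mem (y := p - q) fun t ht => ?_).trans_eq ?_
  · simpa using h t ht
  · rw [dist_eq_norm, sub_sub_cancel]

end Clarke

theorem pi_clarkeTangent_subset {ι : Type*} [Fintype ι] {X : ι → Type*}
    [∀ i, NormedAddCommGroup (X i)] [∀ i, NormedSpace ℝ (X i)] (Ω : ∀ i, Set (X i))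
    (x : ∀ i, X i) :
    univ.pi (fun i => clarkeTangent (Ω i) (x i)) ⊆ clarkeTangent (univ.pi Ω) x := by
  intro z hz xs ts hxs hlim hpos hanti h0
  choose zs hzs hmem using fun i => hz i (mem_univ i) (fun k => xs k i) ts
    (fun k => hxs k i (mem_univ i)) (tendsto_pi_nhds.mp hlim i) hpos hanti h0
  exact ⟨fun k i => zs i k, tendsto_pi_nhds.mpr hzs, fun k i _ => hmem i k⟩

theorem prod_clarkeTangent_subset {X Y : Type*} [NormedAddCommGroup X] [NormedSpace ℝ X]
    [NormedAddCommGroup Y] [NormedSpace ℝ Y] (s : Set X) (t : Set Y) (x : X) (y : Y) :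
    clarkeTangent s x ×ˢ clarkeTangent t y ⊆ clarkeTangent (s ×ˢ t) (x, y) := by
  rintro ⟨z, w⟩ ⟨hz, hw⟩ xs ts hxs hlim hpos hanti h0
  obtain ⟨zs, hzs, hzmem⟩ := hz (fun k => (xs k).1) ts (fun k => (hxs k).1)
    ((continuous_fst.tendsto _).comp hlim) hpos hanti h0
  obtain ⟨ws, hws, hwmem⟩ := hw (fun k => (xs k).2) ts (fun k => (hxs k).2)
    ((continuous_snd.tendsto _).comp hlim) hpos hanti h0
  exact ⟨fun k => (zs k, ws k), hzs.prodMk_nhds hws, fun k => ⟨hzmem k, hwmem k⟩⟩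

theorem mul_normDirDeriv_add_nonneg_of_mem_clarkeTangent {E G : Type*} [NormedAddCommGroup E]
    [NormedSpace ℝ E] [NormedAddCommGroup G] [NormedSpace ℝ G] (A : E →L[ℝ] G) (v : G)
    {φ : ℝ → ℝ} {c : ℝ} (hφ : HasDerivAt φ c ‖v‖) {N : E → ℝ} (hN : Continuous N)
    (hN_smul : ∀ t : ℝ, 0 < t → ∀ z, N (t • z) = t * N z) {W : Set E} {ω : E} (hω : ω ∈ W)
    (hmin : ∀ u ∈ W, φ ‖v‖ ≤ φ ‖v + A (u - ω)‖ + N (u - ω)) {z : E}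
    (hz : z ∈ clarkeTangent W ω) : 0 ≤ c * normDirDeriv v (A z) + N z := by
  have hts := tendsto_one_div_add_one_nhdsGT_zero
  obtain ⟨zs, hzs, hmem⟩ := hz (fun _ => ω) _ (fun _ => hω) tendsto_const_nhds
    (fun k => by positivity)
    (fun i j hij => one_div_le_one_div_of_le (by positivity) (by gcongr))
    (hts.mono_right nhdsWithin_le_nhds)
  have hlim := (hφ.tendsto_sub_div hts (tendsto_div_normDirDeriv v hts
    ((A.continuous.tendsto z).comp hzs))).add ((hN.tendsto z).comp hzs)
  refine ge_of_tendsto hlim (Eventually.of_forall fun k => ?_)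
  have hk : (0 : ℝ) < 1 / (k + 1) := by positivity
  have := hmin _ (hmem k)
  simp only [add_sub_cancel_left, map_smul, hN_smul _ hk] at this
  simp only [Function.comp_apply]
  rw [← mul_le_mul_iff_of_pos_left hk, mul_zero, mul_add, mul_div_cancel₀ _ hk.ne']
  linarith

section Multipliers

variable {ι X : Type*} [Fintype ι] [NormedAddCommGroup X] [NormedSpace ℝ X]

def residualMap (ι X : Type*) [Fintype ι] [NormedAddCommGroup X] [NormedSpace ℝ X] :
    (ι → X) × X →L[ℝ] (ι → X) :=
  ContinuousLinearMap.pi fun i => .snd ℝ _ _ - (ContinuousLinearMap.proj i).comp (.fst ℝ _ _)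

@[simp]
theorem residualMap_apply (z : (ι → X) × X) (i : ι) : residualMap ι X z i = z.2 - z.1 i := rfl

theorem mul_normDirDeriv_residualMap_add_nonneg {Ω : ι → Set X} {Ωn : Set X} {ω : ι → X}
    {ωn : X} (hω : ∀ i, ω i ∈ Ω i) (hωn : ωn ∈ Ωn) {a : ι → X} {φ : ℝ → ℝ} {c : ℝ}
    (hφ : HasDerivAt φ c ‖fun i => ωn + a i - ω i‖) {ε r ρ : ℝ} (hr : 0 ≤ r) (hρ : 0 ≤ ρ)
    (hmin : ∀ u ∈ univ.pi Ω ×ˢ Ωn, φ ‖fun i => ωn + a i - ω i‖ ≤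
      φ ‖fun i => u.2 + a i - u.1 i‖ + ε * prodWeightedNorm r ρ (u - (ω, ωn)))
    {k : (ι → X) × X} (hk : k ∈ clarkeTangent (univ.pi Ω ×ˢ Ωn) (ω, ωn)) :
    0 ≤ c * normDirDeriv (fun i => ωn + a i - ω i) (residualMap ι X k) +
      ε * prodWeightedNorm r ρ k := by
  refine mul_normDirDeriv_add_nonneg_of_mem_clarkeTangent _ _ hφ
    ((continuous_prodWeightedNorm r ρ).const_mul ε)
    (fun t ht z => by rw [(isSublinear_prodWeightedNorm hr hρ).smul_eq t ht]; ring)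
    (show (ω, ωn) ∈ univ.pi Ω ×ˢ Ωn from ⟨fun i _ => hω i, hωn⟩) (fun u hu => ?_) hk
  convert hmin u hu using 4
  ext i
  simp only [Pi.add_apply, residualMap_apply, Prod.snd_sub, Prod.fst_sub, Pi.sub_apply]
  abel

variable [DecidableEq ι]

theorem infDist_clarkeNormal_le_of_nonneg {Ω : ι → Set X} {Ωn : Set X} {ω : ι → X} {ωn : X}
    {ξ : (ι → X) →L[ℝ] ℝ} {ℓ : (ι → X) × X →L[ℝ] ℝ}
    (h : ∀ k ∈ clarkeTangent (univ.pi Ω ×ˢ Ωn) (ω, ωn), 0 ≤ ξ (residualMap ι X k) + ℓ k) :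
    (∀ i, Metric.infDist (ξ.comp (.single ℝ (fun _ => X) i)) (clarkeNormal (Ω i) (ω i)) ≤
        ‖ℓ.comp ((ContinuousLinearMap.inl ℝ _ X).comp (.single ℝ (fun _ => X) i))‖) ∧
      Metric.infDist (-∑ i, ξ.comp (.single ℝ (fun _ => X) i)) (clarkeNormal Ωn ωn) ≤
        ‖ℓ.comp (ContinuousLinearMap.inr ℝ (ι → X) X)‖ := by
  have hT : ∀ z zn, (∀ i, z i ∈ clarkeTangent (Ω i) (ω i)) → zn ∈ clarkeTangent Ωn ωn →
      (z, zn) ∈ clarkeTangent (univ.pi Ω ×ˢ Ωn) (ω, ωn) := fun z zn hz hzn =>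
    prod_clarkeTangent_subset _ _ _ _ ⟨pi_clarkeTangent_subset _ _ fun i _ => hz i, hzn⟩
  refine ⟨fun i => infDist_clarkeNormal_le fun t ht => ?_, infDist_clarkeNormal_le fun t ht => ?_⟩
  · have := h _ (hT (Pi.single i t) 0 (fun j => ?_) zero_mem_clarkeTangent)
    · rw [show residualMap ι X (Pi.single i t, 0) = -Pi.single i t by ext; simp, map_neg] at this
      simp only [ContinuousLinearMap.comp_apply, ContinuousLinearMap.single_apply,
        ContinuousLinearMap.inl_apply]
      linarith
    · rcases eq_or_ne j i with rfl | hji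
      · simpa using ht
      · simpa [hji] using zero_mem_clarkeTangent
  · have := h _ (hT 0 t (fun _ => zero_mem_clarkeTangent) ht)
    rw [show residualMap ι X (0, t) = fun _ => t by ext; simp, ξ.apply_eq_sum_comp_single] at this
    simp at this ⊢
    linarith

theorem exists_clarke_multipliers {Ω : ι → Set X} {Ωn : Set X} {ω : ι → X} {ωn : X}
    (hω : ∀ i, ω i ∈ Ω i) (hωn : ωn ∈ Ωn) {a : ι → X} (hv : (fun i => ωn + a i - ω i) ≠ 0)
    {φ : ℝ → ℝ} {c : ℝ} (hφ : HasDerivAt φ c ‖fun i => ωn + a i - ω i‖) (hc : 0 < c)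
    {ε r ρ : ℝ} (hε : 0 ≤ ε) (hr : 0 < r) (hρ : 0 < ρ)
    (hmin : ∀ u ∈ univ.pi Ω ×ˢ Ωn, φ ‖fun i => ωn + a i - ω i‖ ≤
      φ ‖fun i => u.2 + a i - u.1 i‖ + ε * prodWeightedNorm r ρ (u - (ω, ωn))) :
    ∃ (xs : ι → X →L[ℝ] ℝ) (xn : X →L[ℝ] ℝ), ∑ i, xs i + xn = 0 ∧ ∑ i, ‖xs i‖ = 1 ∧
      ∑ i, xs i (ωn + a i - ω i) = ‖fun i => ωn + a i - ω i‖ ∧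
      c * (r * ∑ i, Metric.infDist (xs i) (clarkeNormal (Ω i) (ω i)) +
        ρ * Metric.infDist xn (clarkeNormal Ωn ωn)) ≤ ε := by
  set v : ι → X := fun i => ωn + a i - ω i
  have hK : ∀ k ∈ clarkeTangentCone (univ.pi Ω ×ˢ Ωn) (ω, ωn),
      0 ≤ normDirDeriv v (residualMap ι X k) + ε / c * prodWeightedNorm r ρ k := fun k hk => by
    have := mul_normDirDeriv_residualMap_add_nonneg hω hωn hφ hr.le hρ.le hmin hk
    rw [← mul_le_mul_iff_of_pos_left hc, mul_zero, mul_add, ← mul_assoc, mul_div_cancel₀ _ hc.ne']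
    exact this
  obtain ⟨ξ, ℓ, hξ, hℓ, hξℓ⟩ := exists_linear_le_of_nonneg_on_cone (residualMap ι X).toLinearMap
    (isSublinear_normDirDeriv v)
    ((isSublinear_prodWeightedNorm hr.le hρ.le).const_mul (div_nonneg hε hc.le)) _ hK
  have hξ_norm : ∀ y, ξ y ≤ ‖y‖ := fun y => (hξ y).trans (normDirDeriv_le_norm v y)
  let ξc := ξ.mkContinuous 1 (LinearMap.norm_apply_le_of_apply_le fun y => by simpa using hξ_norm y)
  let ℓc := ℓ.mkContinuous (ε / c * max r⁻¹ ρ⁻¹) (LinearMap.norm_apply_le_of_apply_le fun z =>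
    (hℓ z).trans (by rw [mul_assoc]; gcongr; exact prodWeightedNorm_le hr.le ρ z))
  obtain ⟨hsum, hval⟩ := sum_norm_comp_single_eq_one (ξ := ξc) hξ_norm hv <| by
    have := (hξ (-v)).trans (normDirDeriv_neg_self_le v)
    rw [map_neg] at this
    exact le_of_neg_le_neg this
  obtain ⟨hdist, hdistn⟩ := infDist_clarkeNormal_le_of_nonneg (ξ := ξc) (ℓ := ℓc) hξℓ
  have hdual := weighted_sum_norm_le (ℓ := ℓc) hr hρ fun z hz =>
    (hℓ z).trans (mul_le_of_le_one_right (by positivity) hz)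
  refine ⟨fun i => ξc.comp (.single ℝ (fun _ => X) i), -∑ i, ξc.comp (.single ℝ (fun _ => X) i),
    by simp, hsum, by rw [← hval, ξc.apply_eq_sum_comp_single], ?_⟩
  rw [← le_div_iff₀' hc]
  refine le_trans ?_ hdual
  gcongr with i
  exact hdist i

end Multipliers

section NonintersectIndex

variable {X : Type*} [NormedAddCommGroup X] {m : ℕ} {Ω : Fin m → Set X} {Ωn : Set X}

theorem nonintersectIndex_nonneg : 0 ≤ nonintersectIndex Ω Ωn :=
  Real.sInf_nonneg (by rintro _ ⟨u, un, -, -, rfl⟩; exact Real.iSup_nonneg fun _ => norm_nonneg _)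

theorem nonintersectIndex_le {u : Fin m → X} {un : X} (hu : ∀ i, u i ∈ Ω i) (hun : un ∈ Ωn) :
    nonintersectIndex Ω Ωn ≤ ⨆ i, ‖un - u i‖ :=
  csInf_le ⟨0, by rintro _ ⟨u, un, -, -, rfl⟩; exact Real.iSup_nonneg fun _ => norm_nonneg _⟩
    ⟨u, un, hu, hun, rfl⟩

theorem residual_ne_zero {a : Fin m → X} (hne : (⋂ i, (fun z => z - a i) '' Ω i) ∩ Ωn = ∅)
    {ω : Fin m → X} {ωn : X} (hω : ∀ i, ω i ∈ Ω i) (hωn : ωn ∈ Ωn) :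
    (fun i => ωn + a i - ω i) ≠ 0 := by
  intro hv
  have : ωn ∈ (⋂ i, (fun z => z - a i) '' Ω i) ∩ Ωn := by
    refine ⟨mem_iInter.mpr fun i => ⟨ω i, hω i, ?_⟩, hωn⟩
    rw [← sub_eq_zero.mp (congr_fun hv i)]
    exact add_sub_cancel_right ωn (a i)
  simp [hne] at this

theorem exists_ekeland_point_of_nonintersectIndex [NormedSpace ℝ X] [CompleteSpace X]
    (hΩ : ∀ i, IsClosed (Ω i)) (hΩn : IsClosed Ωn) {xbar : X} (hxbar : ∀ i, xbar ∈ Ω i)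
    (hxbarn : xbar ∈ Ωn) (a : Fin m → X) {φ : ℝ → ℝ} (hφmono : MonotoneOn φ (Ici 0))
    (hφcont : ContinuousOn φ (Ici 0)) {ε : ℝ} (hε : 0 < ε)
    (hgap : φ ‖a‖ ≤ φ (nonintersectIndex (fun i => (fun z => z - a i) '' Ω i) Ωn) + ε)
    {r ρ : ℝ} (hr : 0 < r) (hρ : 0 < ρ) :
    ∃ (ω : Fin m → X) (ωn : X), (∀ i, ω i ∈ Ω i) ∧ ωn ∈ Ωn ∧ (∀ i, ‖ω i - xbar‖ ≤ r) ∧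
      ‖ωn - xbar‖ ≤ ρ ∧ φ ‖fun i => ωn + a i - ω i‖ ≤ φ ‖a‖ ∧
      ∀ u ∈ univ.pi Ω ×ˢ Ωn, φ ‖fun i => ωn + a i - ω i‖ ≤
        φ ‖fun i => u.2 + a i - u.1 i‖ + ε * prodWeightedNorm r ρ (u - (ω, ωn)) := by
  set F : (Fin m → X) × X → ℝ := fun u => φ ‖fun i => u.2 + a i - u.1 i‖
  have hF : Continuous F := hφcont.comp_continuous (by fun_prop) fun _ => norm_nonneg _
  have hFd : ∀ u ∈ univ.pi Ω ×ˢ Ωn,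
      φ (nonintersectIndex (fun i => (fun z => z - a i) '' Ω i) Ωn) ≤ F u := fun u hu =>
    hφmono nonintersectIndex_nonneg (norm_nonneg _) <| by
      rw [← iSup_norm_eq_norm]
      simpa only [sub_sub_eq_add_sub] using nonintersectIndex_le
        (Ω := fun i => (fun z => z - a i) '' Ω i) (u := fun i => u.1 i - a i)
        (fun i => ⟨u.1 i, hu.1 i (mem_univ i), rfl⟩) hu.2
  have hFa : F (fun _ => xbar, xbar) = φ ‖a‖ := by simp [F]
  obtain ⟨⟨ω, ωn⟩, ⟨hω, hωn⟩, hFω, hball, hmin⟩ := exists_ekeland_prod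
    ((isClosed_set_pi fun i _ => hΩ i).prod hΩn) hF hFd hε ⟨fun i _ => hxbar i, hxbarn⟩
    (fun u hu => hFa ▸ hgap.trans (by linarith [hFd u hu])) hr hρ
  obtain ⟨hball, hballn⟩ := (prodWeightedNorm_le_one_iff hr hρ).mp hball
  exact ⟨ω, ωn, fun i => hω i (mem_univ i), hωn,
    fun i => (norm_le_pi_norm (ω - fun _ => xbar) i).trans hball, hballn, hFa ▸ hFω, hmin⟩

end NonintersectIndex

theorem stmt10_general {X : Type*} [NormedAddCommGroup X] [NormedSpace ℝ X] [CompleteSpace X]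
    {m : ℕ} (Ω : Fin m → Set X) (Ωn : Set X)
    (hΩ : ∀ i, IsClosed (Ω i)) (hΩn : IsClosed Ωn)
    (xbar : X) (hxbar : ∀ i, xbar ∈ Ω i) (hxbarn : xbar ∈ Ωn)
    (a : Fin m → X) (ε : ℝ) (hε : 0 < ε)
    (φ φ' : ℝ → ℝ) (hφmono : StrictMonoOn φ (Set.Ici 0))
    (hφcont : ContinuousOn φ (Set.Ici 0))
    (hφderiv : ∀ t > (0 : ℝ), HasDerivAt φ (φ' t) t)
    (hφ'pos : ∀ t > (0 : ℝ), 0 < φ' t)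
    (hne : (⋂ i, (fun z => z - a i) '' Ω i) ∩ Ωn = ∅)
    (hd : φ (⨆ i, ‖a i‖) <
      φ (nonintersectIndex (fun i => (fun z => z - a i) '' Ω i) Ωn) + ε) :
    ∀ lam > (0 : ℝ), ∀ eta > (0 : ℝ),
      ∃ (ω : Fin m → X) (ωn : X),
        (∀ i, ω i ∈ Ω i ∩ Metric.ball xbar lam) ∧ ωn ∈ Ωn ∩ Metric.ball xbar eta ∧
        0 < (⨆ i, ‖ωn + a i - ω i‖) ∧ (⨆ i, ‖ωn + a i - ω i‖) ≤ (⨆ i, ‖a i‖) ∧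
        ∃ (xs : Fin m → (X →L[ℝ] ℝ)) (xn : X →L[ℝ] ℝ),
          (∑ i, xs i) + xn = 0 ∧ (∑ i, ‖xs i‖) = 1 ∧
          (∑ i, xs i (ωn + a i - ω i)) = (⨆ i, ‖ωn + a i - ω i‖) ∧
          φ' (⨆ i, ‖ωn + a i - ω i‖) *
            (lam * (∑ i, Metric.infDist (xs i) (clarkeNormal (Ω i) (ω i))) +
              eta * Metric.infDist xn (clarkeNormal Ωn ωn)) < ε := by
  intro lam hlam eta heta
  rw [iSup_norm_eq_norm a] at hd ⊢
  -- `ε'` still bounds the gap `φ ‖a‖ - φ d`, and `ε' < θ ε` leaves room to shrink the radii by `θ`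
  obtain ⟨ε', hε'd, hε'ε⟩ := exists_between (max_lt (sub_lt_iff_lt_add'.mpr hd) hε)
  obtain ⟨θ, hθ, hθ1⟩ := exists_between ((div_lt_one hε).mpr hε'ε)
  have hε' : 0 < ε' := (le_max_right _ _).trans_lt hε'd
  have hθ0 : 0 < θ := (div_pos hε' hε).trans hθ
  obtain ⟨ω, ωn, hω, hωn, hωb, hωnb, hσa, hmin⟩ := exists_ekeland_point_of_nonintersectIndex
    hΩ hΩn hxbar hxbarn a hφmono.monotoneOn hφcont hε'
    (sub_le_iff_le_add'.mp ((le_max_left _ _).trans hε'd.le))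
    (mul_pos hθ0 hlam) (mul_pos hθ0 heta)
  have hv := residual_ne_zero hne hω hωn
  have hσ := norm_pos_iff.mpr hv
  obtain ⟨xs, xn, h0, h1, hval, hest⟩ := exists_clarke_multipliers hω hωn hv (hφderiv _ hσ)
    (hφ'pos _ hσ) hε'.le (mul_pos hθ0 hlam) (mul_pos hθ0 heta) hmin
  refine ⟨ω, ωn, ?_⟩
  rw [iSup_norm_eq_norm fun i => ωn + a i - ω i]
  refine ⟨fun i => ⟨hω i, ?_⟩, ⟨hωn, ?_⟩, hσ,
    (hφmono.le_iff_le (norm_nonneg _) (norm_nonneg _)).mp hσa, xs, xn, h0, h1, hval, ?_⟩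
  · exact mem_ball_iff_norm.mpr ((hωb i).trans_lt (mul_lt_of_lt_one_left hlam hθ1))
  · exact mem_ball_iff_norm.mpr (hωnb.trans_lt (mul_lt_of_lt_one_left heta hθ1))
  · have := (div_lt_iff₀ hε).mp hθ
    nlinarith

/-- dual (generalized separation) necessary conditions, in terms of
Clarke normal cones, for the non-intersection property `⋂ᵢ(Ωᵢ−aᵢ) ∩ Ωₙ = ∅`,
with a nonlinear function `φ ∈ 𝒞¹` (given together with its derivative `φ'`). -/
theorem stmt10 {X : Type*} [NormedAddCommGroup X] [NormedSpace ℝ X] [CompleteSpace X]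
    {m : ℕ} (hm : 1 ≤ m) (Ω : Fin m → Set X) (Ωn : Set X)
    (hΩ : ∀ i, IsClosed (Ω i)) (hΩn : IsClosed Ωn)
    (xbar : X) (hxbar : ∀ i, xbar ∈ Ω i) (hxbarn : xbar ∈ Ωn)
    (a : Fin m → X) (ε : ℝ) (hε : 0 < ε)
    (φ φ' : ℝ → ℝ) (hφmono : StrictMonoOn φ (Set.Ici 0))
    (hφcont : ContinuousOn φ (Set.Ici 0)) (hφ0 : φ 0 = 0)
    (hφtop : Tendsto φ atTop atTop)
    (hφderiv : ∀ t > (0 : ℝ), HasDerivAt φ (φ' t) t)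
    (hφ'cont : ContinuousOn φ' (Set.Ioi 0)) (hφ'pos : ∀ t > (0 : ℝ), 0 < φ' t)
    (hne : (⋂ i, (fun z => z - a i) '' Ω i) ∩ Ωn = ∅)
    (hd : φ (⨆ i, ‖a i‖) <
      φ (nonintersectIndex (fun i => (fun z => z - a i) '' Ω i) Ωn) + ε) :
    ∀ lam > (0 : ℝ), ∀ eta > (0 : ℝ),
      ∃ (ω : Fin m → X) (ωn : X),
        (∀ i, ω i ∈ Ω i ∩ Metric.ball xbar lam) ∧ ωn ∈ Ωn ∩ Metric.ball xbar eta ∧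
        0 < (⨆ i, ‖ωn + a i - ω i‖) ∧ (⨆ i, ‖ωn + a i - ω i‖) ≤ (⨆ i, ‖a i‖) ∧
        ∃ (xs : Fin m → (X →L[ℝ] ℝ)) (xn : X →L[ℝ] ℝ),
          (∑ i, xs i) + xn = 0 ∧ (∑ i, ‖xs i‖) = 1 ∧
          (∑ i, xs i (ωn + a i - ω i)) = (⨆ i, ‖ωn + a i - ω i‖) ∧
          φ' (⨆ i, ‖ωn + a i - ω i‖) *
            (lam * (∑ i, Metric.infDist (xs i) (clarkeNormal (Ω i) (ω i))) +
              eta * Metric.infDist xn (clarkeNormal Ωn ωn)) < ε :=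
  stmt10_general Ω Ωn hΩ hΩn xbar hxbar hxbarn a ε hε φ φ' hφmono hφcont hφderiv hφ'pos hne hd
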